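/- Let 𝒞₁ = λz.μa.(a (z λy.(a y))). For every term u and every finite sequence t̄ of E-terms, ((𝒞₁ u) t̄) ▷* μa.(a ((u θ₁) t̄)), where θ₁ = λy.(a (y t̄)), and for every term v₁, (θ₁ v₁) ▷* (a (v₁ t̄)). -/

import Mathlib

/-! # The classical propositional natural deduction (λμ-calculus with product and co-product)

Terms:  T ::= x | λx.T | (T E) | ⟨T,T⟩ | ω₁T | ω₂T | μa.T | (a T)
E-terms: E ::= T | π₁ | π₂ | [x.T, x.T]
λ-variables and μ-variables are drawn from two disjoint alphabets (both modelled by ℕ). -/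

mutual
inductive Trm : Type
| var  : ℕ → Trm                 -- λ-variable x
| lam  : ℕ → Trm → Trm           -- λx.t
| app  : Trm → Etrm → Trm        -- (t ε)
| pair : Trm → Trm → Trm         -- ⟨t,u⟩
| inl  : Trm → Trm               -- ω₁ t
| inr  : Trm → Trm               -- ω₂ t
| mu   : ℕ → Trm → Trm           -- μa.t
| mvar : ℕ → Trm → Trm           -- (a t)

inductive Etrm : Type
| tm   : Trm → Etrm              -- a term used as an E-term
| pi1  : Etrm                    -- π₁
| pi2  : Etrm                    -- π₂
| case : ℕ → Trm → ℕ → Trm → Etrm -- [x.u, y.v]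
end

/-- Iterated application `(t w̄)` of a term to a finite sequence of E-terms. -/
def appSeq (t : Trm) (ws : List Etrm) : Trm := ws.foldl Trm.app t

mutual
/-- Substitution `t[x := v]` of a term for a λ-variable (capture-permitting,
    but not substituting bound occurrences). -/
def substT (x : ℕ) (v : Trm) : Trm → Trm
| .var y => if y = x then v else .var y
| .lam y t => if y = x then .lam y t else .lam y (substT x v t)
| .app t e => .app (substT x v t) (substE x v e)
| .pair t u => .pair (substT x v t) (substT x v u)
| .inl t => .inl (substT x v t)
| .inr t => .inr (substT x v t)
| .mu a t => .mu a (substT x v t)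
| .mvar a t => .mvar a (substT x v t)

def substE (x : ℕ) (v : Trm) : Etrm → Etrm
| .tm t => .tm (substT x v t)
| .pi1 => .pi1
| .pi2 => .pi2
| .case y u z w =>
    .case y (if y = x then u else substT x v u) z (if z = x then w else substT x v w)
end

mutual
/-- μ-substitution `t[a :=* ε]` : replace inductively each subterm `(a v)` by `(a (v ε))`. -/
def musubstT (a : ℕ) (e : Etrm) : Trm → Trm
| .var y => .var y
| .lam y t => .lam y (musubstT a e t)
| .app t f => .app (musubstT a e t) (musubstE a e f)
| .pair t u => .pair (musubstT a e t) (musubstT a e u)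
| .inl t => .inl (musubstT a e t)
| .inr t => .inr (musubstT a e t)
| .mu b t => if b = a then .mu b t else .mu b (musubstT a e t)
| .mvar b t => if b = a then .mvar b (.app (musubstT a e t) e) else .mvar b (musubstT a e t)

def musubstE (a : ℕ) (e : Etrm) : Etrm → Etrm
| .tm t => .tm (musubstT a e t)
| .pi1 => .pi1
| .pi2 => .pi2
| .case y u z w => .case y (musubstT a e u) z (musubstT a e w)
end

mutual
/-- The one step reduction `▷`, generated compatibly with all term constructors. -/
inductive RedT : Trm → Trm → Prop
| beta (x : ℕ) (u v : Trm) : RedT (.app (.lam x u) (.tm v)) (substT x v u)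
| proj1 (t₁ t₂ : Trm) : RedT (.app (.pair t₁ t₂) .pi1) t₁
| proj2 (t₁ t₂ : Trm) : RedT (.app (.pair t₁ t₂) .pi2) t₂
| case1 (t : Trm) (x₁ : ℕ) (u₁ : Trm) (x₂ : ℕ) (u₂ : Trm) :
    RedT (.app (.inl t) (.case x₁ u₁ x₂ u₂)) (substT x₁ t u₁)
| case2 (t : Trm) (x₁ : ℕ) (u₁ : Trm) (x₂ : ℕ) (u₂ : Trm) :
    RedT (.app (.inr t) (.case x₁ u₁ x₂ u₂)) (substT x₂ t u₂)
| perm (t : Trm) (x₁ : ℕ) (u₁ : Trm) (x₂ : ℕ) (u₂ : Trm) (e : Etrm) :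
    RedT (.app (.app t (.case x₁ u₁ x₂ u₂)) e)
         (.app t (.case x₁ (.app u₁ e) x₂ (.app u₂ e)))
| mu (a : ℕ) (t : Trm) (e : Etrm) : RedT (.app (.mu a t) e) (.mu a (musubstT a e t))
| lamC (x : ℕ) {t t' : Trm} : RedT t t' → RedT (.lam x t) (.lam x t')
| appL {t t' : Trm} (e : Etrm) : RedT t t' → RedT (.app t e) (.app t' e)
| appR (t : Trm) {e e' : Etrm} : RedE e e' → RedT (.app t e) (.app t e')
| pairL {t t' : Trm} (u : Trm) : RedT t t' → RedT (.pair t u) (.pair t' u)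
| pairR (t : Trm) {u u' : Trm} : RedT u u' → RedT (.pair t u) (.pair t u')
| inlC {t t' : Trm} : RedT t t' → RedT (.inl t) (.inl t')
| inrC {t t' : Trm} : RedT t t' → RedT (.inr t) (.inr t')
| muC (a : ℕ) {t t' : Trm} : RedT t t' → RedT (.mu a t) (.mu a t')
| mvarC (a : ℕ) {t t' : Trm} : RedT t t' → RedT (.mvar a t) (.mvar a t')

inductive RedE : Etrm → Etrm → Prop
| tm {t t' : Trm} : RedT t t' → RedE (.tm t) (.tm t')
| caseL (x₁ : ℕ) {u₁ u₁' : Trm} (x₂ : ℕ) (u₂ : Trm) :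
    RedT u₁ u₁' → RedE (.case x₁ u₁ x₂ u₂) (.case x₁ u₁' x₂ u₂)
| caseR (x₁ : ℕ) (u₁ : Trm) (x₂ : ℕ) {u₂ u₂' : Trm} :
    RedT u₂ u₂' → RedE (.case x₁ u₁ x₂ u₂) (.case x₁ u₁ x₂ u₂')
end

/-- `t ▷* t'` : reflexive transitive closure of the one step reduction. -/
def Reds : Trm → Trm → Prop := Relation.ReflTransGen RedT

mutual
/-- The set of free μ-variables of a term. -/
def muFreeT : Trm → Set ℕ
| .var _ => ∅
| .lam _ t => muFreeT t
| .app t e => muFreeT t ∪ muFreeE e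
| .pair t u => muFreeT t ∪ muFreeT u
| .inl t => muFreeT t
| .inr t => muFreeT t
| .mu a t => muFreeT t \ {a}
| .mvar a t => insert a (muFreeT t)

def muFreeE : Etrm → Set ℕ
| .tm t => muFreeT t
| .pi1 => ∅
| .pi2 => ∅
| .case _ u _ w => muFreeT u ∪ muFreeT w
end

mutual
/-- The set of free λ-variables of a term. -/
def lamFreeT : Trm → Set ℕ
| .var y => {y}
| .lam y t => lamFreeT t \ {y}
| .app t e => lamFreeT t ∪ lamFreeE e
| .pair t u => lamFreeT t ∪ lamFreeT u
| .inl t => lamFreeT t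
| .inr t => lamFreeT t
| .mu _ t => lamFreeT t
| .mvar _ t => lamFreeT t

def lamFreeE : Etrm → Set ℕ
| .tm t => lamFreeT t
| .pi1 => ∅
| .pi2 => ∅
| .case y u z w => (lamFreeT u \ {y}) ∪ (lamFreeT w \ {z})
end

/-- A term is closed when it has no free λ-variable and no free μ-variable. -/
def ClosedT (t : Trm) : Prop := lamFreeT t = ∅ ∧ muFreeT t = ∅

/-! ## Formulas and typing -/

inductive Fml : Type
| var : ℕ → Fml                  -- propositional variable
| bot : Fml                      -- ⊥
| arr : Fml → Fml → Fml          -- A → B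
| and : Fml → Fml → Fml          -- A ∧ B
| or  : Fml → Fml → Fml          -- A ∨ B

/-- `¬A` is defined as `A → ⊥`. -/
def Fml.neg (A : Fml) : Fml := .arr A .bot

/-- A context is a set of declarations, one formula (at most) for each variable. -/
abbrev Ctx := ℕ → Option Fml

def Ctx.empty : Ctx := fun _ => none

/-- `Γ, x : A`. -/
def Ctx.upd (Γ : Ctx) (x : ℕ) (A : Fml) : Ctx := fun y => if y = x then some A else Γ y

/-- The typing judgment `Γ ⊢ t : A ; Δ` of classical propositional natural deduction. -/
inductive Typ : Ctx → Trm → Fml → Ctx → Prop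
| ax {Γ : Ctx} {Δ : Ctx} {x : ℕ} {A : Fml} :
    Γ x = some A → Typ Γ (.var x) A Δ
| arrI {Γ Δ x t A B} :
    Typ (Γ.upd x A) t B Δ → Typ Γ (.lam x t) (.arr A B) Δ
| arrE {Γ Δ u v A B} :
    Typ Γ u (.arr A B) Δ → Typ Γ v A Δ → Typ Γ (.app u (.tm v)) B Δ
| andI {Γ Δ u v A B} :
    Typ Γ u A Δ → Typ Γ v B Δ → Typ Γ (.pair u v) (.and A B) Δ
| andE1 {Γ Δ t A B} :
    Typ Γ t (.and A B) Δ → Typ Γ (.app t .pi1) A Δ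
| andE2 {Γ Δ t A B} :
    Typ Γ t (.and A B) Δ → Typ Γ (.app t .pi2) B Δ
| orI1 {Γ Δ t A B} :
    Typ Γ t A Δ → Typ Γ (.inl t) (.or A B) Δ
| orI2 {Γ Δ t A B} :
    Typ Γ t B Δ → Typ Γ (.inr t) (.or A B) Δ
| orE {Γ Δ t x u y v A B C} :
    Typ Γ t (.or A B) Δ → Typ (Γ.upd x A) u C Δ → Typ (Γ.upd y B) v C Δ →
    Typ Γ (.app t (.case x u y v)) C Δ
| absI {Γ Δ a t A} :
    Δ a = some A → Typ Γ t A Δ → Typ Γ (.mvar a t) .bot Δ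
| absE {Γ Δ a t A} :
    Typ Γ t .bot (Δ.upd a A) → Typ Γ (.mu a t) A Δ

/-! ## The realisability semantics -/

/-- A set of terms `S` is μ-saturated. -/
def MuSaturated (S : Set Trm) : Prop :=
  (∀ u v : Trm, u ∈ S → Reds v u → v ∈ S) ∧
  (∀ (a : ℕ) (t : Trm), t ∈ S → Trm.mu a t ∈ S ∧ Trm.mvar a t ∈ S)

/-- `K → L = {t : (t u) ∈ L for each u ∈ K}`. -/
def arrS (K L : Set Trm) : Set Trm := {t | ∀ u ∈ K, Trm.app t (.tm u) ∈ L}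

/-- `K ∧ L = {t : (t π₁) ∈ K and (t π₂) ∈ L}`. -/
def andS (K L : Set Trm) : Set Trm := {t | Trm.app t .pi1 ∈ K ∧ Trm.app t .pi2 ∈ L}

/-- `K ∨ L` (relative to a μ-saturated set `S`). -/
def orS (S K L : Set Trm) : Set Trm :=
  {t | ∀ (x y : ℕ) (u v : Trm),
      (∀ r ∈ K, substT x r u ∈ S) → (∀ s ∈ L, substT y s v ∈ S) →
      Trm.app t (.case x u y v) ∈ S}

/-- `X → S = {t : (t w̄) ∈ S for all w̄ ∈ X}`, for `X` a set of finite sequences of E-terms. -/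
def seqArr (X : Set (List Etrm)) (S : Set Trm) : Set Trm := {t | ∀ w ∈ X, appSeq t w ∈ S}

/-- Membership in the model `M = ⟨S; {R i}_{i}⟩`: the smallest collection of sets of terms
    containing `S` and the `R i` and closed under the constructors `→`, `∧` and `∨`. -/
inductive InModel {ι : Type} (S : Set Trm) (R : ι → Set Trm) : Set Trm → Prop
| base : InModel S R S
| rel (i : ι) : InModel S R (R i)
| arr {K L : Set Trm} : InModel S R K → InModel S R L → InModel S R (arrS K L)
| and {K L : Set Trm} : InModel S R K → InModel S R L → InModel S R (andS K L)
| or {K L : Set Trm} : InModel S R K → InModel S R L → InModel S R (orS S K L)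

/-- `G^⊥ = ∪ {X : G = X → S}`. -/
def perp (S G : Set Trm) : Set (List Etrm) := {w | ∃ X : Set (List Etrm), G = seqArr X S ∧ w ∈ X}

/-- The extension of an interpretation `I` of the propositional variables to all formulas
    (relative to the μ-saturated set `S` of the model). -/
def interp (S : Set Trm) (I : ℕ → Set Trm) : Fml → Set Trm
| .var p => I p
| .bot => S
| .arr A B => arrS (interp S I A) (interp S I B)
| .and A B => andS (interp S I A) (interp S I B)
| .or A B => orS S (interp S I A) (interp S I B)

/-! ## Simultaneous substitution (for the adequation lemma) -/

mutual
/-- Simultaneous substitution `t[x₁:=u₁,…,xₙ:=uₙ, a₁:=*v̄₁,…,a_m:=*v̄_m]`, given by an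
    assignment `σ` of terms to λ-variables and an assignment `τ` of finite sequences of
    E-terms to μ-variables. -/
def msubstT (σ : ℕ → Option Trm) (τ : ℕ → Option (List Etrm)) : Trm → Trm
| .var y => (σ y).getD (.var y)
| .lam y t => .lam y (msubstT (fun z => if z = y then none else σ z) τ t)
| .app t e => .app (msubstT σ τ t) (msubstE σ τ e)
| .pair t u => .pair (msubstT σ τ t) (msubstT σ τ u)
| .inl t => .inl (msubstT σ τ t)
| .inr t => .inr (msubstT σ τ t)
| .mu b t => .mu b (msubstT σ (fun c => if c = b then none else τ c) t)
| .mvar b t =>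
    match τ b with
    | some w => .mvar b (appSeq (msubstT σ τ t) w)
    | none => .mvar b (msubstT σ τ t)

def msubstE (σ : ℕ → Option Trm) (τ : ℕ → Option (List Etrm)) : Etrm → Etrm
| .tm t => .tm (msubstT σ τ t)
| .pi1 => .pi1
| .pi2 => .pi2
| .case y u z w =>
    .case y (msubstT (fun z' => if z' = y then none else σ z') τ u)
          z (msubstT (fun z' => if z' = z then none else σ z') τ w)
end

/-- The assignment determined by a finite family: `y ↦ c i` if `y = x i`. -/
noncomputable def finAssign {α : Type} {n : ℕ} (x : Fin n → ℕ) (c : Fin n → α) :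
    ℕ → Option α :=
  fun y => if h : ∃ i, x i = y then some (c h.choose) else none

/-! ## Operational behaviour -/

/-- `M_t`: the smallest set of terms containing `t` and closed under `u ↦ μa.u` and
    `u ↦ (a u)`; its elements are written `μ̲.t`. -/
inductive MuCl (t : Trm) : Trm → Prop
| base : MuCl t t
| mu (a : ℕ) {u : Trm} : MuCl t u → MuCl t (.mu a u)
| mvar (a : ℕ) {u : Trm} : MuCl t u → MuCl t (.mvar a u)

/-- `w ▷* μ̲.t` : `w` reduces to some element of `M_t`. -/
def RedToMu (w t : Trm) : Prop := ∃ s, MuCl t s ∧ Reds w s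

/-- `𝒞₁ = λz.μa.(a (z λy.(a y)))`  (λ-variables `z = 0`, `y = 1`; μ-variable `a = 0`). -/
def calC1 : Trm :=
  .lam 0 (.mu 0 (.mvar 0 (.app (.var 0) (.tm (.lam 1 (.mvar 0 (.var 1)))))))

/-- `θ₁ = λy.(a (y t̄))`. -/
def theta1 (tb : List Etrm) : Trm := .lam 1 (.mvar 0 (appSeq (.var 1) tb))

/-! `𝒞₁ u` β-reduces to `μa.(a (u λy.(a y)))`. Each further argument `e` is absorbed by the
μ-rule, which turns every `(a s)` into `(a (s e))`: the outer one and the one inside the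
continuation `λy.(a y)` alike, so after `t̄` the continuation has become `θ₁`. Freshness of `a`
for `u` and `t̄` confines the μ-substitution to these two occurrences, and freshness of `y` for
`t̄` lets `θ₁ v₁` β-reduce to `(a (v₁ t̄))`. -/

mutual
theorem substT_eq_self_of_notMem (x : ℕ) (v : Trm) :
    ∀ t : Trm, x ∉ lamFreeT t → substT x v t = t
  | .var _, h => by simp_all [lamFreeT, substT, eq_comm]
  | .lam y t, h => by
      by_cases hy : y = x
      · simp [substT, hy]
      · have ht : x ∉ lamFreeT t := by simp_all [lamFreeT, eq_comm]
        simp [substT, hy, substT_eq_self_of_notMem x v t ht]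
  | .app t e, h => by
      simp only [lamFreeT, Set.mem_union, not_or] at h
      simp [substT, substT_eq_self_of_notMem x v t h.1, substE_eq_self_of_notMem x v e h.2]
  | .pair t u, h => by
      simp only [lamFreeT, Set.mem_union, not_or] at h
      simp [substT, substT_eq_self_of_notMem x v t h.1, substT_eq_self_of_notMem x v u h.2]
  | .inl t, h => by simp [substT, substT_eq_self_of_notMem x v t h]
  | .inr t, h => by simp [substT, substT_eq_self_of_notMem x v t h]
  | .mu _ t, h => by simp [substT, substT_eq_self_of_notMem x v t h]
  | .mvar _ t, h => by simp [substT, substT_eq_self_of_notMem x v t h]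

theorem substE_eq_self_of_notMem (x : ℕ) (v : Trm) :
    ∀ e : Etrm, x ∉ lamFreeE e → substE x v e = e
  | .tm t, h => by simp [substE, substT_eq_self_of_notMem x v t h]
  | .pi1, _ => rfl
  | .pi2, _ => rfl
  | .case y u z w, h => by
      simp only [lamFreeE, Set.mem_union, Set.mem_sdiff, Set.mem_singleton_iff, not_or,
        not_and_not_right] at h
      have hu : y ≠ x → substT x v u = u := fun hy => substT_eq_self_of_notMem x v u
        fun hx => hy (h.1 hx).symm
      have hw : z ≠ x → substT x v w = w := fun hz => substT_eq_self_of_notMem x v w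
        fun hx => hz (h.2 hx).symm
      simp only [substE]
      split_ifs <;> simp_all
end

mutual
theorem musubstT_eq_self_of_notMem (a : ℕ) (e : Etrm) :
    ∀ t : Trm, a ∉ muFreeT t → musubstT a e t = t
  | .var _, _ => rfl
  | .lam _ t, h => by simp [musubstT, musubstT_eq_self_of_notMem a e t h]
  | .app t f, h => by
      simp only [muFreeT, Set.mem_union, not_or] at h
      simp [musubstT, musubstT_eq_self_of_notMem a e t h.1, musubstE_eq_self_of_notMem a e f h.2]
  | .pair t u, h => by
      simp only [muFreeT, Set.mem_union, not_or] at h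
      simp [musubstT, musubstT_eq_self_of_notMem a e t h.1, musubstT_eq_self_of_notMem a e u h.2]
  | .inl t, h => by simp [musubstT, musubstT_eq_self_of_notMem a e t h]
  | .inr t, h => by simp [musubstT, musubstT_eq_self_of_notMem a e t h]
  | .mu b t, h => by
      by_cases hb : b = a
      · simp [musubstT, hb]
      · have ht : a ∉ muFreeT t := by simp_all [muFreeT, eq_comm]
        simp [musubstT, hb, musubstT_eq_self_of_notMem a e t ht]
  | .mvar b t, h => by
      simp only [muFreeT, Set.mem_insert_iff, not_or] at h
      simp [musubstT, Ne.symm h.1, musubstT_eq_self_of_notMem a e t h.2]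

theorem musubstE_eq_self_of_notMem (a : ℕ) (e : Etrm) :
    ∀ f : Etrm, a ∉ muFreeE f → musubstE a e f = f
  | .tm t, h => by simp [musubstE, musubstT_eq_self_of_notMem a e t h]
  | .pi1, _ => rfl
  | .pi2, _ => rfl
  | .case _ u _ w, h => by
      simp only [muFreeE, Set.mem_union, not_or] at h
      simp [musubstE, musubstT_eq_self_of_notMem a e u h.1, musubstT_eq_self_of_notMem a e w h.2]
end

theorem appSeq_cons (t : Trm) (e : Etrm) (ws : List Etrm) :
    appSeq t (e :: ws) = appSeq (.app t e) ws := rfl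

theorem appSeq_append (t : Trm) (ws₁ ws₂ : List Etrm) :
    appSeq t (ws₁ ++ ws₂) = appSeq (appSeq t ws₁) ws₂ :=
  List.foldl_append

theorem substT_appSeq (x : ℕ) (v t : Trm) (ws : List Etrm) :
    substT x v (appSeq t ws) = appSeq (substT x v t) (ws.map (substE x v)) := by
  induction ws generalizing t with
  | nil => rfl
  | cons e ws ih => exact ih (.app t e)

theorem musubstT_appSeq (a : ℕ) (e : Etrm) (t : Trm) (ws : List Etrm) :
    musubstT a e (appSeq t ws) = appSeq (musubstT a e t) (ws.map (musubstE a e)) := by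
  induction ws generalizing t with
  | nil => rfl
  | cons f ws ih => exact ih (.app t f)

theorem map_substE_eq_self (x : ℕ) (v : Trm) {ws : List Etrm}
    (h : ∀ e ∈ ws, x ∉ lamFreeE e) : ws.map (substE x v) = ws :=
  (List.map_congr_left fun e he => substE_eq_self_of_notMem x v e (h e he)).trans (List.map_id ws)

theorem map_musubstE_eq_self (a : ℕ) (e : Etrm) {ws : List Etrm}
    (h : ∀ f ∈ ws, a ∉ muFreeE f) : ws.map (musubstE a e) = ws :=
  (List.map_congr_left fun f hf => musubstE_eq_self_of_notMem a e f (h f hf)).trans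
    (List.map_id ws)

theorem reds_appSeq {t t' : Trm} (h : Reds t t') (ws : List Etrm) :
    Reds (appSeq t ws) (appSeq t' ws) := by
  induction ws generalizing t t' with
  | nil => exact h
  | cons e ws ih =>
      exact ih (Relation.ReflTransGen.lift (Trm.app · e) (fun _ _ => RedT.appL e) _ _ h)

theorem reds_mu_appSeq (a : ℕ) (t : Trm) (ws : List Etrm) :
    Reds (appSeq (.mu a t) ws) (.mu a (ws.foldl (fun s e => musubstT a e s) t)) := by
  induction ws generalizing t with
  | nil => exact .refl
  | cons e ws ih =>
      rw [appSeq_cons]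
      exact Relation.ReflTransGen.trans (reds_appSeq (.single (RedT.mu a t e)) ws) (ih _)

theorem musubstT_theta1 (e : Etrm) {p : List Etrm} (hp : ∀ f ∈ p, 0 ∉ muFreeE f) :
    musubstT 0 e (theta1 p) = theta1 (p ++ [e]) := by
  simp only [theta1, musubstT, if_true, musubstT_appSeq, map_musubstE_eq_self 0 e hp,
    appSeq_append]
  rfl

theorem foldl_musubstT_mvar_theta1 {u : Trm} (hu : 0 ∉ muFreeT u) (tb : List Etrm)
    {p : List Etrm} (hp : ∀ f ∈ p ++ tb, 0 ∉ muFreeE f) :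
    tb.foldl (fun s e => musubstT 0 e s) (.mvar 0 (appSeq (.app u (.tm (theta1 p))) p)) =
      .mvar 0 (appSeq (.app u (.tm (theta1 (p ++ tb)))) (p ++ tb)) := by
  induction tb generalizing p with
  | nil => simp
  | cons e tb ih =>
      have hp' : ∀ f ∈ p, 0 ∉ muFreeE f := fun f hf => hp f (by simp [hf])
      have hstep : musubstT 0 e (.mvar 0 (appSeq (.app u (.tm (theta1 p))) p)) =
          .mvar 0 (appSeq (.app u (.tm (theta1 (p ++ [e])))) (p ++ [e])) := by
        simp only [musubstT, if_true, musubstT_appSeq, map_musubstE_eq_self 0 e hp',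
          musubstE, musubstT_eq_self_of_notMem 0 e u hu, musubstT_theta1 e hp', appSeq_append]
        rfl
      rw [List.foldl_cons, hstep, ih (by simpa using hp)]
      simp only [List.append_assoc, List.singleton_append]

theorem calC1_app_red (u : Trm) :
    RedT (.app calC1 (.tm u)) (.mu 0 (.mvar 0 (.app u (.tm (theta1 []))))) :=
  .beta 0 _ u

theorem theta1_app_red {tb : List Etrm} (htb : ∀ e ∈ tb, 1 ∉ lamFreeE e) (v : Trm) :
    RedT (.app (theta1 tb) (.tm v)) (.mvar 0 (appSeq v tb)) := by
  have h := RedT.beta 1 (.mvar 0 (appSeq (.var 1) tb)) v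
  simpa only [theta1, substT, substT_appSeq, map_substE_eq_self 1 v htb, if_true] using h

/-- For every term `u` and finite sequence `t̄` of E-terms (the bound variables `a`, `y`
of `𝒞₁` being fresh for `u` and `t̄`): `((𝒞₁ u) t̄) ▷* μa.(a ((u θ₁) t̄))` where
`θ₁ = λy.(a (y t̄))`, and for every term `v₁`, `(θ₁ v₁) ▷* (a (v₁ t̄))`. -/
theorem callcc_example_behavior (u : Trm) (tb : List Etrm)
    (hu : (0 : ℕ) ∉ muFreeT u)
    (htb : ∀ e ∈ tb, (0 : ℕ) ∉ muFreeE e ∧ (1 : ℕ) ∉ lamFreeE e) :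
    Reds (appSeq (Trm.app calC1 (.tm u)) tb)
        (Trm.mu 0 (.mvar 0 (appSeq (.app u (.tm (theta1 tb))) tb))) ∧
    ∀ v₁ : Trm,
      Reds (Trm.app (theta1 tb) (.tm v₁)) (Trm.mvar 0 (appSeq v₁ tb)) := by
  refine ⟨?_, fun v₁ =>
    Relation.ReflTransGen.single (theta1_app_red (fun e he => (htb e he).2) v₁)⟩
  have hfold := foldl_musubstT_mvar_theta1 hu tb (p := [])
    (by simpa using fun e he => (htb e he).1)
  rw [List.nil_append] at hfold
  rw [← hfold]
  exact Relation.ReflTransGen.trans (reds_appSeq (.single (calC1_app_red u)) tb)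
    (reds_mu_appSeq 0 _ tb)
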